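/- Every 3-dimensional left ideal of Λ contains soc Λ; that is, every left ideal U of Λ with dim_k U = 3 contains the elements yx and zx. -/

import Mathlib

open CategoryTheory Limits Opposite

/-- The algebra `Λ = Λ(q)` of Ringel–Zhang: a `k`-algebra with distinguished elements
`x, y, z` satisfying the defining relations
`x² = y² = z² = 0`, `yz = 0`, `xy + q·yx = 0`, `xz = zx`, `zy = zx`,
and admitting the `k`-basis `{1, x, y, z, yx, zx}`.
Any such algebra is canonically isomorphic to the quotient of the free algebra
`k⟨x,y,z⟩` by the two-sided ideal generated by these relations. -/
structure LambdaAlg (k : Type) [Field k] (q : k) (Λ : Type) [Ring Λ] [Algebra k Λ] :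
    Type where
  x : Λ
  y : Λ
  z : Λ
  hxx : x * x = 0
  hyy : y * y = 0
  hzz : z * z = 0
  hyz : y * z = 0
  hxy : x * y + q • (y * x) = 0
  hxz : x * z - z * x = 0
  hzy : z * y - z * x = 0
  basis : Module.Basis (Fin 6) k Λ
  hb0 : basis 0 = 1
  hb1 : basis 1 = x
  hb2 : basis 2 = y
  hb3 : basis 3 = z
  hb4 : basis 4 = y * x
  hb5 : basis 5 = z * x

namespace LambdaAlg

variable {k : Type} [Field k] {q : k} {Λ : Type} [Ring Λ] [Algebra k Λ]

/-- The element `ax + by + cz` of `Λ`. -/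
def w (D : LambdaAlg k q Λ) (a b c : k) : Λ := a • D.x + b • D.y + c • D.z

/-- The left ideal `U(a,b,c) = Λ(ax+by+cz) + Λ·yx + Λ·zx` of `Λ`. -/
def U (D : LambdaAlg k q Λ) (a b c : k) : Submodule Λ Λ :=
  Submodule.span Λ {D.w a b c, D.y * D.x, D.z * D.x}

/-- The left `Λ`-module `M(a,b,c) = Λ/U(a,b,c)`. -/
abbrev M (D : LambdaAlg k q Λ) (a b c : k) : Type := Λ ⧸ D.U a b c

/-- The right ideal `U′(a,b,c) = (ax+by+cz)Λ + yx·Λ + zx·Λ` of `Λ`,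
viewed as a `Λᵐᵒᵖ`-submodule of `Λ`. -/
def U' (D : LambdaAlg k q Λ) (a b c : k) : Submodule Λᵐᵒᵖ Λ :=
  Submodule.span Λᵐᵒᵖ {D.w a b c, D.y * D.x, D.z * D.x}

/-- The right `Λ`-module `M′(a,b,c) = Λ/U′(a,b,c)` (a module over `Λᵐᵒᵖ`). -/
abbrev M' (D : LambdaAlg k q Λ) (a b c : k) : Type := Λ ⧸ D.U' a b c

/-- The `k`-subspace `{m ∈ M : x·m = y·m = z·m = 0}` of a left `Λ`-module `M`;
since `x, y, z` generate `rad Λ` and every simple `Λ`-module is isomorphic to `k`,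
this is the socle of `M`. -/
def ann (D : LambdaAlg k q Λ) (M : Type) [AddCommGroup M] [Module k M] [Module Λ M]
    [IsScalarTower k Λ M] : Submodule k M where
  carrier := {m | D.x • m = 0 ∧ D.y • m = 0 ∧ D.z • m = 0}
  add_mem' := by
    rintro a b ⟨h1, h2, h3⟩ ⟨g1, g2, g3⟩
    simp [smul_add, h1, h2, h3, g1, g2, g3]
  zero_mem' := by simp
  smul_mem' := by
    rintro a m ⟨h1, h2, h3⟩
    refine ⟨?_, ?_, ?_⟩ <;> rw [smul_comm] <;> simp [h1, h2, h3]

/-- The submodule `(rad Λ)·M = x·M + y·M + z·M` of a left `Λ`-module `M`. -/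
def radM (D : LambdaAlg k q Λ) (M : Type) [AddCommGroup M] [Module Λ M] :
    Submodule Λ M :=
  Submodule.span Λ
    (Set.range (fun m : M => D.x • m) ∪ Set.range (fun m : M => D.y • m) ∪
      Set.range (fun m : M => D.z • m))

end LambdaAlg

/-- A module is indecomposable if it is nonzero and is not the direct sum of two
nonzero submodules. -/
def IsIndecomposable (R : Type) [Ring R] (M : Type) [AddCommGroup M] [Module R M] :
    Prop :=
  Nontrivial M ∧
    ∀ N₁ N₂ : Submodule R M, N₁ ⊓ N₂ = ⊥ → N₁ ⊔ N₂ = ⊤ → N₁ = ⊥ ∨ N₂ = ⊥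

/-- A module is torsionless if it admits an injective linear map into a finite free
module. -/
def IsTorsionless (R : Type) [Ring R] (M : Type) [AddCommGroup M] [Module R M] : Prop :=
  ∃ (n : ℕ) (f : M →ₗ[R] (Fin n → R)), Function.Injective f

/-- The canonical evaluation map `M → M** = Hom_{Λᵒᵖ}(Hom_Λ(M, Λ), Λ)`,
sending `m` to `f ↦ f m`. -/
def evalMap (Λ : Type) [Ring Λ] (M : Type) [AddCommGroup M] [Module Λ M] :
    M → ((M →ₗ[Λ] Λ) →ₗ[Λᵐᵒᵖ] Λ) := fun m =>
  { toFun := fun f => f m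
    map_add' := fun _ _ => rfl
    map_smul' := fun _ _ => rfl }

/-- The transformation `ω′(a,b,c) = (a, q⁻¹b, −((a+q⁻¹b)/a)·c)` on triples. -/
def omegaPrime {k : Type} [Field k] (q : k) (t : k × k × k) : k × k × k :=
  (t.1, q⁻¹ * t.2.1, -((t.1 + q⁻¹ * t.2.1) / t.1) * t.2.2)

/-!
A left ideal `U ≠ Λ` lies in `rad Λ`, since an element with nonzero constant term is a unit
(its radical part is nilpotent, `(rad Λ)³ = 0`). Multiplying `u = a₁x + a₂y + a₃z + s`,
`s ∈ soc Λ`, on the left gives `y·u = a₁·yx`, `z·u = (a₁+a₂)·zx` and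
`x·u = -q a₂·yx + a₃·zx`. So `U` contains `yx` and `zx` unless all elements of `U` satisfy two
independent linear conditions on `(a₁, a₂, a₃)`; in that case `U` lies in a 3-dimensional space
containing `soc Λ`, and equality follows by counting dimensions.
-/

open Module

theorem Submodule.eq_span_of_le_of_card_le_finrank {K V : Type*} [DivisionRing K]
    [AddCommGroup V] [Module K V] {W : Submodule K V} (s : Finset V)
    (hle : W ≤ Submodule.span K s) (hcard : s.card ≤ finrank K W) :
    W = Submodule.span K s :=
  Submodule.eq_of_le_of_finrank_le hle ((finrank_span_finset_le_card s).trans hcard)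

namespace LambdaAlg

variable {k : Type} [Field k] {q : k} {Λ : Type} [Ring Λ] [Algebra k Λ]

theorem ne_top_of_finrank_eq_three (D : LambdaAlg k q Λ) {U : Submodule Λ Λ}
    (hU : finrank k U = 3) : U ≠ ⊤ := by
  rintro rfl
  rw [(Submodule.topEquiv.restrictScalars k).finrank_eq, finrank_eq_card_basis D.basis] at hU
  simp at hU

variable (D : LambdaAlg k q Λ)

theorem x_mul_y : D.x * D.y = -(q • (D.y * D.x)) := by
  linear_combination (norm := noncomm_ring) D.hxy

theorem x_mul_z : D.x * D.z = D.z * D.x := by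
  linear_combination (norm := noncomm_ring) D.hxz

theorem z_mul_y : D.z * D.y = D.z * D.x := by
  linear_combination (norm := noncomm_ring) D.hzy

theorem yx_mul_x : D.y * D.x * D.x = 0 := by rw [mul_assoc, D.hxx, mul_zero]

theorem zx_mul_x : D.z * D.x * D.x = 0 := by rw [mul_assoc, D.hxx, mul_zero]

theorem x_mul_yx : D.x * (D.y * D.x) = 0 := by
  rw [← mul_assoc, x_mul_y, neg_mul, smul_mul_assoc, yx_mul_x, smul_zero, neg_zero]

theorem y_mul_yx : D.y * (D.y * D.x) = 0 := by rw [← mul_assoc, D.hyy, zero_mul]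

theorem z_mul_yx : D.z * (D.y * D.x) = 0 := by rw [← mul_assoc, z_mul_y, zx_mul_x]

theorem x_mul_zx : D.x * (D.z * D.x) = 0 := by rw [← mul_assoc, x_mul_z, zx_mul_x]

theorem y_mul_zx : D.y * (D.z * D.x) = 0 := by rw [← mul_assoc, D.hyz, zero_mul]

theorem z_mul_zx : D.z * (D.z * D.x) = 0 := by rw [← mul_assoc, D.hzz, zero_mul]

theorem yx_mul_y : D.y * D.x * D.y = 0 := by
  rw [mul_assoc, x_mul_y, mul_neg, mul_smul_comm, y_mul_yx, smul_zero, neg_zero]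

theorem yx_mul_z : D.y * D.x * D.z = 0 := by rw [mul_assoc, x_mul_z, y_mul_zx]

theorem zx_mul_y : D.z * D.x * D.y = 0 := by
  rw [mul_assoc, x_mul_y, mul_neg, mul_smul_comm, z_mul_yx, smul_zero, neg_zero]

theorem zx_mul_z : D.z * D.x * D.z = 0 := by rw [mul_assoc, x_mul_z, z_mul_zx]

theorem eq_sum_repr (u : Λ) : u = D.basis.repr u 0 • (1 : Λ) + D.basis.repr u 1 • D.x +
    D.basis.repr u 2 • D.y + D.basis.repr u 3 • D.z +
    D.basis.repr u 4 • (D.y * D.x) + D.basis.repr u 5 • (D.z * D.x) := by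
  conv_lhs => rw [← D.basis.sum_repr u, Fin.sum_univ_six]
  rw [D.hb0, D.hb1, D.hb2, D.hb3, D.hb4, D.hb5]

theorem repr_one : D.basis.repr 1 = Finsupp.single 0 1 := by
  rw [← D.hb0, Basis.repr_self]

theorem mul_self_of_rad (a b c d e : k) :
    (a • D.x + b • D.y + c • D.z + d • (D.y * D.x) + e • (D.z * D.x)) *
      (a • D.x + b • D.y + c • D.z + d • (D.y * D.x) + e • (D.z * D.x)) =
    (a * b - q * (a * b)) • (D.y * D.x) + (a * c + c * a + c * b) • (D.z * D.x) := by
  simp only [mul_add, add_mul, smul_mul_assoc, mul_smul_comm, ← mul_assoc, D.hxx, D.hyy,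
    D.hzz, D.hyz, x_mul_y, x_mul_z, z_mul_y, yx_mul_x, yx_mul_y, yx_mul_z, zx_mul_x,
    zx_mul_y, zx_mul_z, neg_mul, smul_mul_assoc, smul_zero, neg_zero, add_zero]
  module

theorem isNilpotent_of_repr_zero_eq_zero {u : Λ} (h0 : D.basis.repr u 0 = 0) :
    IsNilpotent u := by
  refine ⟨3, ?_⟩
  rw [pow_three, D.eq_sum_repr u, h0, zero_smul, zero_add, mul_self_of_rad]
  simp only [mul_add, add_mul, smul_mul_assoc, mul_smul_comm, ← mul_assoc, D.hyy, D.hzz,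
    D.hyz, x_mul_y, x_mul_z, z_mul_y, yx_mul_x, yx_mul_y, yx_mul_z, zx_mul_x,
    zx_mul_y, zx_mul_z, neg_mul, smul_mul_assoc, smul_zero, neg_zero, add_zero]

theorem isUnit_of_repr_zero_ne_zero {u : Λ} (hu : D.basis.repr u 0 ≠ 0) : IsUnit u := by
  set a := D.basis.repr u 0
  have hrad : IsNilpotent (u - algebraMap k Λ a) :=
    D.isNilpotent_of_repr_zero_eq_zero (by simp [Algebra.algebraMap_eq_smul_one, repr_one, a])
  simpa using hrad.isUnit_add_left_of_commute ((isUnit_iff_ne_zero.mpr hu).map _)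
    (Algebra.commutes a _).symm

theorem repr_zero_eq_zero_of_mem {U : Submodule Λ Λ} (hU : U ≠ ⊤) {u : Λ} (hu : u ∈ U) :
    D.basis.repr u 0 = 0 := by
  by_contra h
  exact hU (Ideal.eq_top_of_isUnit_mem U hu (D.isUnit_of_repr_zero_ne_zero h))

theorem x_mul_of_repr_zero_eq_zero {u : Λ} (h0 : D.basis.repr u 0 = 0) :
    D.x * u = (-(q * D.basis.repr u 2)) • (D.y * D.x) + D.basis.repr u 3 • (D.z * D.x) := by
  conv_lhs => rw [D.eq_sum_repr u, h0]
  simp only [zero_smul, zero_add, mul_add, mul_smul_comm, D.hxx, x_mul_y, x_mul_z, x_mul_yx,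
    x_mul_zx, smul_zero, add_zero, smul_neg, smul_smul, neg_smul, mul_comm q]

theorem y_mul_of_repr_zero_eq_zero {u : Λ} (h0 : D.basis.repr u 0 = 0) :
    D.y * u = D.basis.repr u 1 • (D.y * D.x) := by
  conv_lhs => rw [D.eq_sum_repr u, h0]
  simp only [zero_smul, zero_add, mul_add, mul_smul_comm, D.hyy, D.hyz, y_mul_yx, y_mul_zx,
    smul_zero, add_zero]

theorem z_mul_of_repr_zero_eq_zero {u : Λ} (h0 : D.basis.repr u 0 = 0) :
    D.z * u = (D.basis.repr u 1 + D.basis.repr u 2) • (D.z * D.x) := by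
  conv_lhs => rw [D.eq_sum_repr u, h0]
  simp only [zero_smul, zero_add, mul_add, mul_smul_comm, D.hzz, z_mul_y, z_mul_yx, z_mul_zx,
    smul_zero, add_zero, add_smul]

theorem soc_mem_of_forall_mem_span {U : Submodule Λ Λ} (hU : finrank k U = 3) (v : Λ)
    (hspan : ∀ u ∈ U, ∃ a b c : k, u = a • v + b • (D.y * D.x) + c • (D.z * D.x)) :
    D.y * D.x ∈ U ∧ D.z * D.x ∈ U := by
  classical
  have hle :
      U.restrictScalars k ≤ Submodule.span k ({v, D.y * D.x, D.z * D.x} : Finset Λ) := by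
    intro u hu
    obtain ⟨a, b, c, rfl⟩ := hspan u hu
    simp only [Finset.coe_insert, Finset.coe_singleton]
    refine add_mem (add_mem ?_ ?_) ?_ <;>
      exact Submodule.smul_mem _ _ (Submodule.subset_span (by simp))
  have heq := Submodule.eq_span_of_le_of_card_le_finrank _ hle (Finset.card_le_three.trans hU.ge)
  have hmem : ∀ w ∈ ({v, D.y * D.x, D.z * D.x} : Finset Λ), w ∈ U.restrictScalars k :=
    fun w hw => heq ▸ Submodule.subset_span hw
  exact ⟨hmem _ (by simp), hmem _ (by simp)⟩

theorem y_mul_x_mem (hq : q ≠ 0) {U : Submodule Λ Λ} (hU : finrank k U = 3)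
    (hrad : ∀ u ∈ U, D.basis.repr u 0 = 0) : D.y * D.x ∈ U := by
  by_cases h1 : ∃ u ∈ U, D.basis.repr u 1 ≠ 0
  · obtain ⟨u, hu, hu1⟩ := h1
    have := U.smul_mem D.y hu
    rwa [smul_eq_mul, D.y_mul_of_repr_zero_eq_zero (hrad u hu), U.smul_mem_iff hu1] at this
  push Not at h1
  by_cases h2 : ∃ u ∈ U, D.basis.repr u 2 ≠ 0
  · obtain ⟨u, hu, hu2⟩ := h2
    have hzx : D.z * D.x ∈ U := by
      have := U.smul_mem D.z hu
      rwa [smul_eq_mul, D.z_mul_of_repr_zero_eq_zero (hrad u hu), h1 u hu, zero_add,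
        U.smul_mem_iff hu2] at this
    have := U.sub_mem (U.smul_mem D.x hu) (U.smul_of_tower_mem (D.basis.repr u 3) hzx)
    rwa [smul_eq_mul, D.x_mul_of_repr_zero_eq_zero (hrad u hu), add_sub_cancel_right,
      U.smul_mem_iff (by simp [hq, hu2])] at this
  push Not at h2
  refine (D.soc_mem_of_forall_mem_span hU D.z fun u hu =>
    ⟨D.basis.repr u 3, D.basis.repr u 4, D.basis.repr u 5, ?_⟩).1
  conv_lhs => rw [D.eq_sum_repr u, hrad u hu, h1 u hu, h2 u hu]
  simp only [zero_smul, zero_add]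

theorem z_mul_x_mem {U : Submodule Λ Λ} (hU : finrank k U = 3)
    (hrad : ∀ u ∈ U, D.basis.repr u 0 = 0) (hyx : D.y * D.x ∈ U) : D.z * D.x ∈ U := by
  by_cases h12 : ∃ u ∈ U, D.basis.repr u 1 + D.basis.repr u 2 ≠ 0
  · obtain ⟨u, hu, hu12⟩ := h12
    have := U.smul_mem D.z hu
    rwa [smul_eq_mul, D.z_mul_of_repr_zero_eq_zero (hrad u hu), U.smul_mem_iff hu12] at this
  push Not at h12
  by_cases h3 : ∃ u ∈ U, D.basis.repr u 3 ≠ 0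
  · obtain ⟨u, hu, hu3⟩ := h3
    have := U.sub_mem (U.smul_mem D.x hu) (U.smul_of_tower_mem (-(q * D.basis.repr u 2)) hyx)
    rwa [smul_eq_mul, D.x_mul_of_repr_zero_eq_zero (hrad u hu), add_sub_cancel_left,
      U.smul_mem_iff hu3] at this
  push Not at h3
  refine (D.soc_mem_of_forall_mem_span hU (D.x - D.y) fun u hu =>
    ⟨D.basis.repr u 1, D.basis.repr u 4, D.basis.repr u 5, ?_⟩).2
  have h2 : D.basis.repr u 2 = -D.basis.repr u 1 := eq_neg_of_add_eq_zero_right (h12 u hu)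
  conv_lhs => rw [D.eq_sum_repr u, hrad u hu, h2, h3 u hu]
  module

end LambdaAlg

/-- Every 3-dimensional left ideal of `Λ` contains `soc Λ`, i.e. contains `yx`
and `zx`. -/
theorem statement4 (k : Type) [Field k] (q : k) (hq : q ≠ 0)
    (Λ : Type) [Ring Λ] [Algebra k Λ] (D : LambdaAlg k q Λ)
    (U : Submodule Λ Λ) (hU : Module.finrank k ↥U = 3) :
    D.y * D.x ∈ U ∧ D.z * D.x ∈ U := by
  have hrad : ∀ u ∈ U, D.basis.repr u 0 = 0 := fun _ hu =>
    D.repr_zero_eq_zero_of_mem (D.ne_top_of_finrank_eq_three hU) hu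
  have hyx := D.y_mul_x_mem hq hU hrad
  exact ⟨hyx, D.z_mul_x_mem hU hrad hyx⟩
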